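/- arXiv:1107.1585 — 8 statements merged into one kernel-verified Lean document; each statement's English description precedes it below -/
import Mathlib

section
/- Suppose that no two distinct terminals of T are adjacent in G and that no vertex of V ∖ T is adjacent to two distinct terminals of T. Let d : V ∖ T → ℝ be the assignment with d_v = 1/2 for v ∈ N(T) and d_v = 0 otherwise. Let t ∈ T and let C ⊆ V ∖ T be a separating cut of t. Define d'_v = d_v + 1/2 for v ∈ C ∖ N(t), d'_v = d_v − 1/2 for v ∈ N(t) ∖ C, and d'_v = d_v otherwise. Then d'_v ≥ 0 for all v, d' is an LP-feasible assignment for (G,T), and the cost of d' equals the cost of d plus (|C| − |N(t)|)/2; in particular, if |C| ≤ |N(t)| then the cost of d' is at most the cost of d. -/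
open Finset

/-- `N(S)`: the set of vertices outside `S` having a neighbour in `S`. -/
def nbhd {V : Type*} [Fintype V] [DecidableEq V] (G : SimpleGraph V) [DecidableRel G.Adj]
    (S : Finset V) : Finset V :=
  univ.filter (fun v => v ∉ S ∧ ∃ u ∈ S, G.Adj v u)

/-- `d` is an LP-feasible assignment for `(G, T)`. -/
def LPFeasible {V : Type*} [DecidableEq V] (G : SimpleGraph V) (T : Finset V) (d : V → ℝ) :
    Prop :=
  (∀ v, v ∉ T → 0 ≤ d v) ∧
  ∀ ⦃t₁ t₂ : V⦄, t₁ ∈ T → t₂ ∈ T → t₁ ≠ t₂ →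
    ∀ p : G.Walk t₁ t₂, p.IsPath →
      1 ≤ ∑ v ∈ p.support.toFinset.filter (fun v => v ∉ T), d v

/-- The cost of an LP assignment for `(G, T)`. -/
def lpCost {V : Type*} [Fintype V] [DecidableEq V] (T : Finset V) (d : V → ℝ) : ℝ :=
  ∑ v ∈ univ.filter (fun v => v ∉ T), d v

/-- `S` is a separating cut of the terminal `t`: `S` consists of non-terminal vertices
and every path from `t` to another terminal contains a vertex of `S`. -/
def IsSeparatingCut {V : Type*} [DecidableEq V] (G : SimpleGraph V) (T : Finset V) (t : V)
    (S : Finset V) : Prop :=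
  (∀ x ∈ S, x ∉ T) ∧
  ∀ ⦃t' : V⦄, t' ∈ T → t' ≠ t →
    ∀ p : G.Walk t t', p.IsPath → ∃ v ∈ p.support, v ∈ S

/-!
Under `d`, the first and last inner vertices of a path between two distinct terminals lie in
`N(T)` and are distinct, since no vertex sees two terminals; so each carries `1/2`. Rerouting
lowers only the values on `N(t)`, and these two vertices avoid `N(t)` unless the path ends at `t`.
On a path from `t`, the vertex before the other end still carries `1/2` and the cut `C` supplies
another `1/2`, or a full `1` if the cut vertex is that vertex itself, which then lies in
`C ∖ N(t)`.
-/

section Reroute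

variable {α : Type*} [DecidableEq α]

noncomputable def reroute (d : α → ℝ) (C N : Finset α) (v : α) : ℝ :=
  if v ∈ C \ N then d v + 1 / 2 else if v ∈ N \ C then d v - 1 / 2 else d v

variable {d : α → ℝ} {C N : Finset α} {v : α}

lemma reroute_eq_add (d : α → ℝ) (C N : Finset α) (v : α) :
    reroute d C N v = d v + ((if v ∈ C then 1 / 2 else 0) - (if v ∈ N then 1 / 2 else 0)) := by
  by_cases hC : v ∈ C <;> by_cases hN : v ∈ N <;> simp [reroute, hC, hN, sub_eq_add_neg]

lemma sum_reroute {F : Finset α} (hC : C ⊆ F) (hN : N ⊆ F) :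
    ∑ v ∈ F, reroute d C N v = ∑ v ∈ F, d v + ((#C : ℝ) - #N) / 2 := by
  simp only [reroute_eq_add, sum_add_distrib, sum_sub_distrib, sum_ite_mem,
    inter_eq_right.mpr hC, inter_eq_right.mpr hN, sum_const, nsmul_eq_mul]
  ring

lemma reroute_of_mem_of_notMem (hC : v ∈ C) (hN : v ∉ N) : reroute d C N v = d v + 1 / 2 := by
  simp [reroute, hC, hN]

lemma le_reroute_of_notMem (hN : v ∉ N) : d v ≤ reroute d C N v := by
  rw [reroute_eq_add]
  by_cases hC : v ∈ C <;> simp [hC, hN]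

lemma half_le_reroute_of_mem (hC : v ∈ C) (h0 : 0 ≤ d v) (hN : v ∈ N → 1 / 2 ≤ d v) :
    1 / 2 ≤ reroute d C N v := by
  rw [reroute_eq_add]
  by_cases hv : v ∈ N
  · simpa [hC, hv] using hN hv
  · simp only [hC, hv, if_true, if_false]
    linarith

lemma reroute_nonneg (h0 : 0 ≤ d v) (hN : v ∈ N → 1 / 2 ≤ d v) : 0 ≤ reroute d C N v := by
  rw [reroute_eq_add]
  by_cases hv : v ∈ N
  · have := hN hv
    split_ifs <;> linarith
  · simp only [hv, if_false]
    split_ifs <;> linarith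

end Reroute

lemma lpCost_reroute {V : Type*} [Fintype V] [DecidableEq V] {T C N : Finset V} {d : V → ℝ}
    (hC : ∀ x ∈ C, x ∉ T) (hN : ∀ x ∈ N, x ∉ T) :
    lpCost T (reroute d C N) = lpCost T d + ((#C : ℝ) - #N) / 2 :=
  sum_reroute (fun x hx => by simpa using hC x hx) (fun x hx => by simpa using hN x hx)

lemma one_le_sum_of_half_le {α : Type*} [DecidableEq α] {S : Finset α} {f : α → ℝ} {a b : α}
    (hf : ∀ v ∈ S, 0 ≤ f v) (ha : a ∈ S) (hb : b ∈ S) (hfa : 1 / 2 ≤ f a) (hfb : 1 / 2 ≤ f b)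
    (hab : a = b → 1 ≤ f a) : 1 ≤ ∑ v ∈ S, f v := by
  by_cases h : a = b
  · exact (hab h).trans (single_le_sum hf ha)
  · calc (1 : ℝ) ≤ f a + f b := by linarith
      _ = ∑ v ∈ {a, b}, f v := (sum_pair h).symm
      _ ≤ ∑ v ∈ S, f v :=
        sum_le_sum_of_subset_of_nonneg (insert_subset ha (singleton_subset_iff.mpr hb))
          fun v hv _ => hf v hv

lemma SimpleGraph.IsIndepSet.notMem_of_adj {V : Type*} {G : SimpleGraph V} {T : Set V} {s v : V}
    (hT : G.IsIndepSet T) (hs : s ∈ T) (h : G.Adj v s) : v ∉ T :=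
  fun hv => hT hv hs h.ne h

namespace SimpleGraph

variable {V : Type*} [Fintype V] [DecidableEq V] {G : SimpleGraph V} [DecidableRel G.Adj]
  {T C : Finset V} {d : V → ℝ} {t s v : V}

lemma mem_nbhd_singleton : v ∈ nbhd G {t} ↔ G.Adj v t := by
  simp only [nbhd, mem_filter, mem_univ, mem_singleton, exists_eq_left, true_and]
  exact ⟨And.right, fun h => ⟨h.ne, h⟩⟩

lemma IsIndepSet.mem_nbhd_of_adj (hT : G.IsIndepSet T) (hs : s ∈ T) (h : G.Adj v s) :
    v ∈ nbhd G T :=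
  mem_filter.mpr ⟨mem_univ v, hT.notMem_of_adj hs h, s, hs, h⟩

lemma IsIndepSet.nbhd_singleton_subset (hT : G.IsIndepSet T) (ht : t ∈ T) :
    nbhd G {t} ⊆ nbhd G T :=
  fun _ hv => hT.mem_nbhd_of_adj ht (mem_nbhd_singleton.mp hv)

lemma reroute_nbhd_singleton_nonneg (hT : G.IsIndepSet T) (ht : t ∈ T) (hd0 : 0 ≤ d v)
    (hdN : ∀ v ∈ nbhd G T, 1 / 2 ≤ d v) : 0 ≤ reroute d C (nbhd G {t}) v :=
  reroute_nonneg hd0 fun hv => hdN v (hT.nbhd_singleton_subset ht hv)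

lemma half_le_reroute_of_adj (hT : G.IsIndepSet T)
    (hdeg : ∀ v, v ∉ T → ∀ t₁ ∈ T, ∀ t₂ ∈ T, G.Adj v t₁ → G.Adj v t₂ → t₁ = t₂)
    (ht : t ∈ T) (hdN : ∀ v ∈ nbhd G T, 1 / 2 ≤ d v) (hs : s ∈ T) (hst : s ≠ t)
    (h : G.Adj v s) :
    1 / 2 ≤ reroute d C (nbhd G {t}) v ∧ (v ∈ C → 1 ≤ reroute d C (nbhd G {t}) v) := by
  have hvT := hT.notMem_of_adj hs h
  have hvN : v ∉ nbhd G {t} := fun hvt =>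
    hst (hdeg v hvT s hs t ht h (mem_nbhd_singleton.mp hvt))
  have hdv := hdN v (hT.mem_nbhd_of_adj hs h)
  refine ⟨hdv.trans (le_reroute_of_notMem hvN), fun hvC => ?_⟩
  rw [reroute_of_mem_of_notMem hvC hvN]
  linarith

lemma one_le_sum_reroute_of_ne_end (hT : G.IsIndepSet T)
    (hdeg : ∀ v, v ∉ T → ∀ t₁ ∈ T, ∀ t₂ ∈ T, G.Adj v t₁ → G.Adj v t₂ → t₁ = t₂)
    (ht : t ∈ T) (hC : IsSeparatingCut G T t C) (hd0 : ∀ v, 0 ≤ d v)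
    (hdN : ∀ v ∈ nbhd G T, 1 / 2 ≤ d v) {t₁ t₂ : V} (ht₁ : t₁ ∈ T) (ht₂ : t₂ ∈ T)
    (hne : t₁ ≠ t₂) (ht₂t : t₂ ≠ t) (p : G.Walk t₁ t₂) (hp : p.IsPath) :
    1 ≤ ∑ v ∈ p.support.toFinset.filter (fun v => v ∉ T), reroute d C (nbhd G {t}) v := by
  set f := reroute d C (nbhd G {t})
  have hmem : ∀ v ∈ p.support, v ∉ T → v ∈ p.support.toFinset.filter (fun v => v ∉ T) :=
    fun v hv hvT => mem_filter.mpr ⟨List.mem_toFinset.mpr hv, hvT⟩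
  have hnil : ¬ p.Nil := Walk.not_nil_of_ne hne
  have hb : G.Adj p.penultimate t₂ := Walk.adj_penultimate hnil
  obtain ⟨hfb, hfbC⟩ := half_le_reroute_of_adj (C := C) hT hdeg ht hdN ht₂ ht₂t hb
  obtain ⟨a, ha, haT, hfa, hab⟩ : ∃ a ∈ p.support, a ∉ T ∧ 1 / 2 ≤ f a ∧
      (a = p.penultimate → 1 ≤ f a) := by
    by_cases ht₁t : t₁ = t
    · subst ht₁t
      obtain ⟨w, hw, hwC⟩ := hC.2 ht₂ hne.symm p hp
      exact ⟨w, hw, hC.1 w hwC,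
        half_le_reroute_of_mem hwC (hd0 w) fun h => hdN w (hT.nbhd_singleton_subset ht h),
        fun h => by subst h; exact hfbC hwC⟩
    · have ha : G.Adj p.snd t₁ := (Walk.adj_snd hnil).symm
      exact ⟨p.snd, p.getVert_mem_support 1, hT.notMem_of_adj ht₁ ha,
        (half_le_reroute_of_adj hT hdeg ht hdN ht₁ ht₁t ha).1,
        fun h => absurd (hdeg _ (hT.notMem_of_adj ht₁ ha) t₁ ht₁ t₂ ht₂ ha (h ▸ hb)) hne⟩
  exact one_le_sum_of_half_le (fun v _ => reroute_nbhd_singleton_nonneg hT ht (hd0 v) hdN)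
    (hmem a ha haT) (hmem _ (p.getVert_mem_support _) (hT.notMem_of_adj ht₂ hb)) hfa hfb hab

lemma lpFeasible_reroute (hT : G.IsIndepSet T)
    (hdeg : ∀ v, v ∉ T → ∀ t₁ ∈ T, ∀ t₂ ∈ T, G.Adj v t₁ → G.Adj v t₂ → t₁ = t₂)
    (ht : t ∈ T) (hC : IsSeparatingCut G T t C) (hd0 : ∀ v, 0 ≤ d v)
    (hdN : ∀ v ∈ nbhd G T, 1 / 2 ≤ d v) :
    LPFeasible G T (reroute d C (nbhd G {t})) := by
  refine ⟨fun v _ => reroute_nbhd_singleton_nonneg hT ht (hd0 v) hdN,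
    fun t₁ t₂ ht₁ ht₂ hne p hp => ?_⟩
  by_cases ht₂t : t₂ = t
  · have := one_le_sum_reroute_of_ne_end hT hdeg ht hC hd0 hdN ht₂ ht₁ hne.symm
      (ht₂t ▸ hne) p.reverse hp.reverse
    rwa [Walk.support_reverse, List.toFinset_reverse] at this
  · exact one_le_sum_reroute_of_ne_end hT hdeg ht hC hd0 hdN ht₁ ht₂ hne ht₂t p hp

end SimpleGraph

open SimpleGraph in
/-- Rerouting the half-integral LP solution through a separating cut `C` of a
terminal `t`: the modified assignment `d'` is nonnegative, LP-feasible, and its cost is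
the cost of `d` plus `(|C| − |N(t)|)/2`; in particular if `|C| ≤ |N(t)|` then the cost
does not increase. -/
theorem reroute_through_separating_cut {V : Type*} [Fintype V] [DecidableEq V]
    (G : SimpleGraph V) [DecidableRel G.Adj] (T : Finset V)
    (hTT : ∀ t₁ ∈ T, ∀ t₂ ∈ T, t₁ ≠ t₂ → ¬ G.Adj t₁ t₂)
    (hdeg : ∀ v, v ∉ T → ∀ t₁ ∈ T, ∀ t₂ ∈ T, G.Adj v t₁ → G.Adj v t₂ → t₁ = t₂)
    (t : V) (ht : t ∈ T) (C : Finset V) (hC : IsSeparatingCut G T t C)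
    (d d' : V → ℝ)
    (hd : d = fun v => if v ∈ nbhd G T then (1 : ℝ) / 2 else 0)
    (hd' : d' = fun v =>
      if v ∈ C \ nbhd G {t} then d v + 1 / 2
      else if v ∈ nbhd G {t} \ C then d v - 1 / 2
      else d v) :
    (∀ v, v ∉ T → 0 ≤ d' v) ∧ LPFeasible G T d' ∧
    lpCost T d' = lpCost T d + ((C.card : ℝ) - ((nbhd G {t}).card : ℝ)) / 2 ∧
    (C.card ≤ (nbhd G {t}).card → lpCost T d' ≤ lpCost T d) := by
  have hT : G.IsIndepSet T := fun a ha b hb hab => hTT a ha b hb hab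
  have hd0 : ∀ v, 0 ≤ d v := fun v => by simp only [hd]; split_ifs <;> norm_num
  have hdN : ∀ v ∈ nbhd G T, 1 / 2 ≤ d v := fun v hv => by simp [hd, hv]
  obtain rfl : d' = reroute d C (nbhd G {t}) := hd'
  have hfeas := lpFeasible_reroute hT hdeg ht hC hd0 hdN
  have hcost := lpCost_reroute (d := d) hC.1 fun x hx =>
    hT.notMem_of_adj ht (mem_nbhd_singleton.mp hx)
  refine ⟨hfeas.1, hfeas, hcost, fun hle => ?_⟩
  have : (#C : ℝ) ≤ #(nbhd G {t}) := by exact_mod_cast hle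
  linarith
end

section
/- Let G = (V,E) be a finite simple undirected graph and let G' be the graph on vertex set V ⊎ V (with copies written inl v and inr v) whose edges are: inl u – inl v for every edge uv ∈ E, and inl v – inr v for every v ∈ V. Let T = { inr v : v ∈ V } be the set of terminals of G'. Then a set X ⊆ V is a vertex cover of G if and only if { inl v : v ∈ X } is a multiway cut for (G',T). -/
open Finset

/-- The graph `G'` on `V ⊕ V`: `inl u — inl v` for every edge `uv` of `G`, together with
the pendant edges `inl v — inr v` for every `v ∈ V`. -/
def terminalGadget {V : Type*} (G : SimpleGraph V) : SimpleGraph (V ⊕ V) where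
  Adj a b :=
    match a, b with
    | .inl u, .inl v => G.Adj u v
    | .inl u, .inr v => u = v
    | .inr u, .inl v => u = v
    | .inr _, .inr _ => False
  symm := ⟨by
    rintro (u | u) (v | v) h
    · exact G.adj_symm h
    · exact h.symm
    · exact h.symm
    · exact h⟩
  loopless := ⟨by
    rintro (u | u) h
    · exact G.ne_of_adj h rfl
    · exact h⟩

/-- `X` is a multiway cut for `(H, T)` (set version): `X` consists of non-terminal
vertices and every path between two distinct terminals contains a vertex of `X`. -/
def IsMultiwayCut {W : Type*} (H : SimpleGraph W) (T X : Set W) : Prop :=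
  (∀ x ∈ X, x ∉ T) ∧
  ∀ ⦃t₁ t₂ : W⦄, t₁ ∈ T → t₂ ∈ T → t₁ ≠ t₂ →
    ∀ p : H.Walk t₁ t₂, p.IsPath → ∃ v ∈ p.support, v ∈ X

/-! Deleting a vertex cover from `G` leaves no edges, so in `G'` minus `inl '' X` every
edge is a pendant edge `inl v — inr v`, and no path joins two distinct terminals. Conversely, an
uncovered edge `uv` would leave the path `inr u — inl u — inl v — inr v` intact. -/

namespace SimpleGraph

variable {W α : Type*} {H : SimpleGraph W}

theorem Walk.apply_eq_of_forall_adj_notMem (f : W → α) (S : Set W)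
    (hf : ∀ ⦃a b⦄, H.Adj a b → a ∉ S → b ∉ S → f a = f b) :
    ∀ {x y : W} (p : H.Walk x y), (∀ v ∈ p.support, v ∉ S) → f x = f y
  | _, _, .nil, _ => rfl
  | _, _, .cons h p, hp => by
    rw [support_cons, List.forall_mem_cons] at hp
    exact (hf h hp.1 (hp.2 _ p.start_mem_support)).trans
      (p.apply_eq_of_forall_adj_notMem f S hf hp.2)

variable {V : Type*} {G : SimpleGraph V} {X : Set V}

@[simp] theorem terminalGadget_adj_inl_inl {u v : V} :
    (terminalGadget G).Adj (.inl u) (.inl v) ↔ G.Adj u v := Iff.rfl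

@[simp] theorem terminalGadget_adj_inl_inr {u v : V} :
    (terminalGadget G).Adj (.inl u) (.inr v) ↔ u = v := Iff.rfl

@[simp] theorem terminalGadget_adj_inr_inl {u v : V} :
    (terminalGadget G).Adj (.inr u) (.inl v) ↔ u = v := Iff.rfl

@[simp] theorem terminalGadget_not_adj_inr_inr {u v : V} :
    ¬(terminalGadget G).Adj (.inr u) (.inr v) := id

theorem IsVertexCover.elim_eq_of_terminalGadget_adj (hX : G.IsVertexCover X) ⦃a b : V ⊕ V⦄
    (hab : (terminalGadget G).Adj a b) (ha : a ∉ Sum.inl '' X) (hb : b ∉ Sum.inl '' X) :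
    Sum.elim id id a = Sum.elim id id b := by
  rcases a with u | u <;> rcases b with v | v <;> simp only [terminalGadget_adj_inl_inl,
    terminalGadget_adj_inl_inr, terminalGadget_adj_inr_inl, terminalGadget_not_adj_inr_inr] at hab
  · rcases hX hab with hu | hv
    exacts [absurd ⟨u, hu, rfl⟩ ha, absurd ⟨v, hv, rfl⟩ hb]
  all_goals exact hab

theorem IsVertexCover.isMultiwayCut_terminalGadget (hX : G.IsVertexCover X) :
    IsMultiwayCut (terminalGadget G) (Set.range Sum.inr) (Sum.inl '' X) := by
  refine ⟨?_, ?_⟩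
  · rintro _ ⟨v, -, rfl⟩ ⟨w, hw⟩
    exact Sum.inr_ne_inl hw
  · rintro _ _ ⟨a, rfl⟩ ⟨b, rfl⟩ hab p -
    by_contra! hp
    exact hab (congrArg Sum.inr
      (p.apply_eq_of_forall_adj_notMem _ _ hX.elim_eq_of_terminalGadget_adj hp))

theorem _root_.IsMultiwayCut.isVertexCover_of_terminalGadget
    (hX : IsMultiwayCut (terminalGadget G) (Set.range Sum.inr) (Sum.inl '' X)) :
    G.IsVertexCover X := by
  intro u v huv
  let p : (terminalGadget G).Walk (.inr u) (.inr v) :=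
    .cons (terminalGadget_adj_inr_inl.2 rfl) (.cons (terminalGadget_adj_inl_inl.2 huv)
      (.cons (terminalGadget_adj_inl_inr.2 rfl) .nil))
  have hp : p.IsPath := by simp [p, Walk.isPath_def, huv.ne]
  obtain ⟨w, hw, ⟨c, hc, rfl⟩⟩ := hX.2 ⟨u, rfl⟩ ⟨v, rfl⟩ (by simpa using huv.ne) p hp
  simp only [p, Walk.support_cons, Walk.support_nil, List.mem_cons, List.not_mem_nil,
    Sum.inl.injEq, reduceCtorEq, false_or, or_false] at hw
  rcases hw with rfl | rfl
  exacts [.inl hc, .inr hc]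

end SimpleGraph

/-- `X ⊆ V` is a vertex cover of `G` if and only if `{inl v : v ∈ X}` is a multiway cut
for `(G', T)` where `T = {inr v : v ∈ V}`. -/
theorem vertexCover_iff_multiwayCut {V : Type*} (G : SimpleGraph V) (X : Set V) :
    (∀ u v : V, G.Adj u v → u ∈ X ∨ v ∈ X) ↔
    IsMultiwayCut (terminalGadget G) (Set.range Sum.inr) (Sum.inl '' X) := by
  exact ⟨fun h ↦ SimpleGraph.IsVertexCover.isMultiwayCut_terminalGadget fun u v ↦ h u v,
    fun h u v huv ↦ h.isVertexCover_of_terminalGadget huv⟩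
end

section
/- Let Φ be a 2-CNF formula in which every clause consists of exactly two (possibly equal) literal occurrences, and let G_Φ be the occurrence graph of Φ. Suppose there exist a truth assignment φ of the variables of Φ and a set X of clauses of Φ such that φ satisfies every clause of Φ not in X. Then G_Φ has a vertex cover of size at most μ(G_Φ) + |X|. -/
/-!
Take as cover the vertices of the literals made true by `φ`, one per occurrence, together with
one endpoint of the clause edge of each clause in `X`. The vertices made true by `φ` meet every
edge `v(x,i) v(¬x,j)` and the clause edge of every clause satisfied by `φ`. The number of
occurrences is the size of the matching `{v(x,i) v(¬x,i)}`, so it is at most `μ(G_Φ)`.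
-/

open Finset

/-- The occurrence graph `G_Φ` of a 2-CNF formula `Φ` in which every clause consists of
exactly two (possibly equal) literal occurrences.

The formula is encoded as follows: `Var` is the set of variables, `n x` is the number of
occurrences of the variable `x`, numbered by `Fin (n x)`; an occurrence is an element of
`Σ x, Fin (n x)`; `sgn o = true` iff occurrence `o` is a positive literal; `C` is the set
of clauses and the bijection `e : C × Bool ≃ Σ x, Fin (n x)` assigns to each clause its
two literal occurrences (so each occurrence belongs to exactly one clause slot).

Vertices are pairs `(⟨x, i⟩, b)`, where `(⟨x, i⟩, true) = v(x, i)` and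
`(⟨x, i⟩, false) = v(¬x, i)`. Edges: `v(x,i) — v(¬x,j)` for every variable `x` and all
`i, j` (a complete bipartite graph between `V(x)` and `V(¬x)`), plus one clause edge
joining the vertices `(o, sgn o)` of the two occurrences `o` of each clause. -/
def occGraph {Var C : Type*} (n : Var → ℕ) (sgn : (Σ x : Var, Fin (n x)) → Bool)
    (e : C × Bool ≃ (Σ x : Var, Fin (n x))) :
    SimpleGraph ((Σ x : Var, Fin (n x)) × Bool) :=
  SimpleGraph.fromRel (fun a b =>
    (a.1.1 = b.1.1 ∧ a.2 ≠ b.2) ∨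
    (∃ c : C, a = (e (c, false), sgn (e (c, false))) ∧ b = (e (c, true), sgn (e (c, true)))))

/-- The truth assignment `φ` satisfies the clause `c`: one of the two literal occurrences
of `c` is made true by `φ`. -/
def clauseSat {Var C : Type*} (n : Var → ℕ) (sgn : (Σ x : Var, Fin (n x)) → Bool)
    (e : C × Bool ≃ (Σ x : Var, Fin (n x))) (φ : Var → Bool) (c : C) : Prop :=
  φ (e (c, false)).1 = sgn (e (c, false)) ∨ φ (e (c, true)).1 = sgn (e (c, true))

/-- `M` is a matching of `G`: a set of edges of `G` that are pairwise vertex-disjoint. -/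
def IsMatching {V : Type*} (G : SimpleGraph V) (M : Finset (Sym2 V)) : Prop :=
  (∀ e ∈ M, e ∈ G.edgeSet) ∧
  ∀ e ∈ M, ∀ f ∈ M, e ≠ f → ∀ v : V, v ∈ e → v ∉ f

/-- `μ(G)`: the maximum cardinality of a matching of `G`. -/
noncomputable def matchingNumber {V : Type*} (G : SimpleGraph V) : ℕ :=
  sSup {n : ℕ | ∃ M : Finset (Sym2 V), IsMatching G M ∧ M.card = n}

/-- `Y` is a vertex cover of `G`: every edge has an endpoint in `Y`. -/
def IsVertexCover {V : Type*} (G : SimpleGraph V) (Y : Finset V) : Prop :=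
  ∀ u v : V, G.Adj u v → u ∈ Y ∨ v ∈ Y

instance {Var C : Type*} (n : Var → ℕ) (sgn : (Σ x : Var, Fin (n x)) → Bool)
    (e : C × Bool ≃ (Σ x : Var, Fin (n x))) (φ : Var → Bool) :
    DecidablePred (clauseSat n sgn e φ) := fun _ => by
  unfold clauseSat; infer_instance

theorem card_le_matchingNumber {V : Type*} [Finite V] {G : SimpleGraph V} {M : Finset (Sym2 V)}
    (hM : IsMatching G M) : M.card ≤ matchingNumber G := by
  have := Fintype.ofFinite (Sym2 V)
  refine le_csSup ⟨Fintype.card (Sym2 V), ?_⟩ ⟨M, hM, rfl⟩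
  rintro _ ⟨M', -, rfl⟩
  exact card_le_univ M'

section Pairs

variable {α : Type*} [DecidableEq α]

def pairEdges (s : Finset α) : Finset (Sym2 (α × Bool)) :=
  s.image fun a => s((a, true), (a, false))

theorem card_pairEdges (s : Finset α) : (pairEdges s).card = s.card :=
  card_image_of_injective _ fun a b hab => by
    simp only [Sym2.eq_iff, Prod.mk.injEq] at hab
    tauto

theorem isMatching_pairEdges {G : SimpleGraph (α × Bool)} {s : Finset α}
    (h : ∀ a ∈ s, G.Adj (a, true) (a, false)) : IsMatching G (pairEdges s) := by
  simp only [IsMatching, pairEdges, forall_mem_image]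
  refine ⟨h, fun a _ b _ hne v hva hvb => hne ?_⟩
  obtain rfl : a = b := by
    simp only [Sym2.mem_iff] at hva hvb
    rcases hva with rfl | rfl <;> rcases hvb with h | h <;> exact congrArg Prod.fst h
  rfl

end Pairs

namespace OccGraph

variable {Var C : Type*} {n : Var → ℕ} (sgn : (Σ x : Var, Fin (n x)) → Bool)
  (e : C × Bool ≃ (Σ x : Var, Fin (n x)))

def clauseVertex (b : Bool) (c : C) : (Σ x : Var, Fin (n x)) × Bool :=
  (e (c, b), sgn (e (c, b)))

variable {sgn e}

theorem adj_cases {u v : (Σ x : Var, Fin (n x)) × Bool} (h : (occGraph n sgn e).Adj u v) :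
    (u.1.1 = v.1.1 ∧ u.2 ≠ v.2) ∨ ∃ c : C,
      (u = clauseVertex sgn e false c ∧ v = clauseVertex sgn e true c) ∨
      (u = clauseVertex sgn e true c ∧ v = clauseVertex sgn e false c) := by
  obtain ⟨-, (h | ⟨c, hu, hv⟩) | (⟨hx, hb⟩ | ⟨c, hv, hu⟩)⟩ := (SimpleGraph.fromRel_adj _ _ _).1 h
  · exact Or.inl h
  · exact Or.inr ⟨c, Or.inl ⟨hu, hv⟩⟩
  · exact Or.inl ⟨hx.symm, hb.symm⟩
  · exact Or.inr ⟨c, Or.inr ⟨hu, hv⟩⟩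

theorem adj_pair (o : Σ x : Var, Fin (n x)) : (occGraph n sgn e).Adj (o, true) (o, false) :=
  (SimpleGraph.fromRel_adj _ _ _).2 ⟨by simp, Or.inl (Or.inl ⟨rfl, nofun⟩)⟩

theorem card_occurrences_le_matchingNumber [Fintype Var] :
    Fintype.card (Σ x : Var, Fin (n x)) ≤ matchingNumber (occGraph n sgn e) := by
  classical
  rw [← card_univ, ← card_pairEdges]
  exact card_le_matchingNumber (isMatching_pairEdges fun o _ => adj_pair o)

def trueVertices [Fintype Var] (φ : Var → Bool) : Finset ((Σ x : Var, Fin (n x)) × Bool) :=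
  univ.map ⟨fun o => (o, φ o.1), fun _ _ h => congrArg Prod.fst h⟩

theorem mem_trueVertices [Fintype Var] {φ : Var → Bool} {p : (Σ x : Var, Fin (n x)) × Bool} :
    p ∈ trueVertices φ ↔ p.2 = φ p.1.1 := by
  rw [trueVertices, mem_map]
  exact ⟨by rintro ⟨o, -, rfl⟩; rfl, fun h => ⟨p.1, mem_univ _, Prod.ext rfl h.symm⟩⟩

theorem card_trueVertices [Fintype Var] (φ : Var → Bool) :
    (trueVertices (n := n) φ).card = Fintype.card (Σ x : Var, Fin (n x)) := by
  rw [trueVertices, card_map, card_univ]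

theorem isVertexCover_trueVertices_union [Fintype Var] [DecidableEq Var] {φ : Var → Bool} {X : Finset C}
    (hφ : ∀ c : C, c ∉ X → clauseSat n sgn e φ c) :
    IsVertexCover (occGraph n sgn e) (trueVertices φ ∪ X.image (clauseVertex sgn e false)) := by
  have hclause (c : C) : (clauseVertex sgn e false c).2 = φ (clauseVertex sgn e false c).1.1 ∨
      c ∈ X ∨ (clauseVertex sgn e true c).2 = φ (clauseVertex sgn e true c).1.1 := by
    by_cases hc : c ∈ X
    · exact .inr (.inl hc)
    · rcases hφ c hc with h | h
      · exact .inl h.symm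
      · exact .inr (.inr h.symm)
  intro u v huv
  simp only [mem_union, mem_trueVertices, mem_image]
  rcases adj_cases huv with ⟨hx, hb⟩ | ⟨c, ⟨rfl, rfl⟩ | ⟨rfl, rfl⟩⟩
  · have : u.2 = φ u.1.1 ∨ v.2 = φ v.1.1 := by
      rw [← hx]
      revert hb
      cases u.2 <;> cases v.2 <;> cases φ u.1.1 <;> simp
    tauto
  · rcases hclause c with h | hc | h
    exacts [.inl (.inl h), .inl (.inr ⟨c, hc, rfl⟩), .inr (.inl h)]
  · rcases hclause c with h | hc | h
    exacts [.inr (.inl h), .inr (.inr ⟨c, hc, rfl⟩), .inl (.inl h)]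

end OccGraph

theorem occGraph_vertexCover_of_assignment_general {Var C : Type*} [Fintype Var]
    (n : Var → ℕ) (sgn : (Σ x : Var, Fin (n x)) → Bool)
    (e : C × Bool ≃ (Σ x : Var, Fin (n x))) (φ : Var → Bool) (X : Finset C)
    (hφ : ∀ c : C, c ∉ X → clauseSat n sgn e φ c) :
    ∃ Y : Finset ((Σ x : Var, Fin (n x)) × Bool),
      IsVertexCover (occGraph n sgn e) Y ∧
      Y.card ≤ matchingNumber (occGraph n sgn e) + X.card := by
  classical
  refine ⟨_, OccGraph.isVertexCover_trueVertices_union hφ, ?_⟩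
  calc _ ≤ (OccGraph.trueVertices φ).card + (X.image (OccGraph.clauseVertex sgn e false)).card :=
        card_union_le _ _
    _ ≤ matchingNumber (occGraph n sgn e) + X.card := by
        rw [OccGraph.card_trueVertices]
        exact add_le_add OccGraph.card_occurrences_le_matchingNumber card_image_le

/-- If the truth assignment `φ` satisfies every clause of `Φ` outside a set `X` of
clauses, then the occurrence graph `G_Φ` has a vertex cover of size at most
`μ(G_Φ) + |X|`. -/
theorem occGraph_vertexCover_of_assignment {Var C : Type*} [Fintype Var] [DecidableEq Var]
    [Fintype C] [DecidableEq C] (n : Var → ℕ) (sgn : (Σ x : Var, Fin (n x)) → Bool)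
    (e : C × Bool ≃ (Σ x : Var, Fin (n x))) (φ : Var → Bool) (X : Finset C)
    (hφ : ∀ c : C, c ∉ X → clauseSat n sgn e φ c) :
    ∃ Y : Finset ((Σ x : Var, Fin (n x)) × Bool),
      IsVertexCover (occGraph n sgn e) Y ∧
      Y.card ≤ matchingNumber (occGraph n sgn e) + X.card :=
  occGraph_vertexCover_of_assignment_general n sgn e φ X hφ
end

section
/- Let Φ be a 2-CNF formula in which every clause consists of exactly two (possibly equal) literal occurrences, and let G_Φ be the occurrence graph of Φ. Suppose Y is a vertex cover of G_Φ. Then there exists a truth assignment φ of the variables of Φ such that the number of clauses of Φ not satisfied by φ is at most |Y| − μ(G_Φ). -/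
open Finset

/-!
Set the variable `x` to true iff every positive vertex `v(x, i)` lies in the cover `Y`. If some
`v(x, j)` is missing, the complete bipartite edges between `V(x)` and `V(¬x)` put all of `V(¬x)`
into `Y`; so in either case `Y` contains, for every occurrence, the vertex whose literal `φ` makes
true. These are as many vertices as there are occurrences, `2|C|`. The clause edge of an
unsatisfied clause joins two vertices whose literals are false, so `Y` contains one more vertex
per unsatisfied clause. Finally a matching covers `2 μ(G_Φ)` of the `4|C|` vertices.
-/

theorem IsMatching.card_mul_two_le_natCard {V : Type*} [Finite V] {G : SimpleGraph V}
    {M : Finset (Sym2 V)} (hM : IsMatching G M) : #M * 2 ≤ Nat.card V := by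
  classical
  have := Fintype.ofFinite V
  have hdisj : (M : Set (Sym2 V)).PairwiseDisjoint Sym2.toFinset := by
    intro s hs t ht hst
    rw [Function.onFun, Finset.disjoint_left]
    exact fun v hvs hvt =>
      hM.2 s hs t ht hst v (Sym2.mem_toFinset.1 hvs) (Sym2.mem_toFinset.1 hvt)
  calc #M * 2 = ∑ s ∈ M, #s.toFinset := by
        rw [sum_congr rfl fun s hs => Sym2.card_toFinset_of_not_isDiag s
          (G.not_isDiag_of_mem_edgeSet (hM.1 s hs)), sum_const, smul_eq_mul]
    _ = #(M.biUnion Sym2.toFinset) := (card_biUnion hdisj).symm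
    _ ≤ Nat.card V := by rw [Nat.card_eq_fintype_card]; exact card_le_univ _

theorem matchingNumber_mul_two_le_natCard {V : Type*} [Finite V] (G : SimpleGraph V) :
    matchingNumber G * 2 ≤ Nat.card V := by
  rw [← Nat.le_div_iff_mul_le two_pos]
  refine csSup_le' ?_
  rintro m ⟨M, hM, rfl⟩
  exact (Nat.le_div_iff_mul_le two_pos).2 hM.card_mul_two_le_natCard

section OccGraph

variable {Var C : Type*} {n : Var → ℕ} {sgn : (Σ x : Var, Fin (n x)) → Bool}
  {e : C × Bool ≃ (Σ x : Var, Fin (n x))} {Y : Finset ((Σ x : Var, Fin (n x)) × Bool)}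
  {φ : Var → Bool}

theorem occGraph_adj_pos_neg (x : Var) (i j : Fin (n x)) :
    (occGraph n sgn e).Adj (⟨x, i⟩, true) (⟨x, j⟩, false) := by
  rw [occGraph, SimpleGraph.fromRel_adj]
  exact ⟨by simp, Or.inl (Or.inl ⟨rfl, by simp⟩)⟩

theorem occGraph_adj_clause (c : C) :
    (occGraph n sgn e).Adj (e (c, false), sgn (e (c, false))) (e (c, true), sgn (e (c, true))) := by
  rw [occGraph, SimpleGraph.fromRel_adj]
  refine ⟨fun h => ?_, Or.inl (Or.inr ⟨c, rfl, rfl⟩)⟩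
  simpa using e.injective (congrArg Prod.fst h)

theorem exists_assignment_mem_of_isVertexCover (hY : IsVertexCover (occGraph n sgn e) Y) :
    ∃ φ : Var → Bool, ∀ o, (o, φ o.1) ∈ Y := by
  classical
  refine ⟨fun x => decide (∀ i : Fin (n x), (⟨x, i⟩, true) ∈ Y), fun ⟨x, i⟩ => ?_⟩
  by_cases hpos : ∀ j : Fin (n x), (⟨x, j⟩, true) ∈ Y
  · simp [hpos]
  · obtain ⟨j, hj⟩ := not_forall.1 hpos
    simpa [hpos] using (hY _ _ (occGraph_adj_pos_neg x j i)).resolve_left hj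

theorem card_mul_two_le_card_filter_agree [Fintype C] (e : C × Bool ≃ (Σ x : Var, Fin (n x)))
    (hφ : ∀ o, (o, φ o.1) ∈ Y) :
    Fintype.card C * 2 ≤ #{v ∈ Y | v.2 = φ v.1.1} := by
  calc Fintype.card C * 2 = #(univ : Finset (C × Bool)) := by simp
    _ ≤ _ := card_le_card_of_injOn (fun p => (e p, φ (e p).1))
          (fun p _ => mem_filter.2 ⟨hφ (e p), rfl⟩)
          (fun p _ q _ h => e.injective (congrArg Prod.fst h))

theorem card_unsat_le_card_filter_disagree [Fintype C] (hY : IsVertexCover (occGraph n sgn e) Y) :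
    #(univ.filter (fun c : C => ¬ clauseSat n sgn e φ c)) ≤ #{v ∈ Y | ¬ v.2 = φ v.1.1} := by
  refine card_le_card_of_surjOn (fun v => (e.symm v.1).1) fun c hc => ?_
  have hunsat : ∀ b, ¬ sgn (e (c, b)) = φ (e (c, b)).1 := by
    simp only [coe_filter, Set.mem_ofPred_eq, mem_univ, true_and, clauseSat, not_or] at hc
    exact fun b => b.casesOn (Ne.symm hc.1) (Ne.symm hc.2)
  obtain ⟨b, hb⟩ : ∃ b, (e (c, b), sgn (e (c, b))) ∈ Y :=
    (hY _ _ (occGraph_adj_clause c)).elim (⟨false, ·⟩) (⟨true, ·⟩)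
  exact ⟨(e (c, b), sgn (e (c, b))), mem_filter.2 ⟨hb, hunsat b⟩, by simp⟩

theorem card_unsat_add_mul_two_le_card [Fintype C] (hY : IsVertexCover (occGraph n sgn e) Y)
    (hφ : ∀ o, (o, φ o.1) ∈ Y) :
    #(univ.filter (fun c : C => ¬ clauseSat n sgn e φ c)) + Fintype.card C * 2 ≤ #Y := by
  have hsplit := card_filter_add_card_filter_not (s := Y) (fun v => v.2 = φ v.1.1)
  have hagree := card_mul_two_le_card_filter_agree e hφ
  have hdisagree := card_unsat_le_card_filter_disagree (φ := φ) hY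
  omega

end OccGraph

theorem occGraph_assignment_of_vertexCover_general {Var C : Type*}
    [Fintype C] (n : Var → ℕ) (sgn : (Σ x : Var, Fin (n x)) → Bool)
    (e : C × Bool ≃ (Σ x : Var, Fin (n x)))
    (Y : Finset ((Σ x : Var, Fin (n x)) × Bool))
    (hY : IsVertexCover (occGraph n sgn e) Y) :
    ∃ φ : Var → Bool,
      (univ.filter (fun c : C => ¬ clauseSat n sgn e φ c)).card +
        matchingNumber (occGraph n sgn e) ≤ Y.card := by
  obtain ⟨φ, hφ⟩ := exists_assignment_mem_of_isVertexCover hY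
  have : Finite (Σ x : Var, Fin (n x)) := .of_equiv _ e
  have hμ := matchingNumber_mul_two_le_natCard (occGraph n sgn e)
  rw [Nat.card_prod, ← Nat.card_congr e, Nat.card_prod] at hμ
  simp only [Nat.card_eq_fintype_card, Fintype.card_bool] at hμ
  have hcover := card_unsat_add_mul_two_le_card hY hφ
  exact ⟨φ, by omega⟩

/-- If `Y` is a vertex cover of the occurrence graph `G_Φ`, then there is a truth
assignment `φ` such that the number of clauses of `Φ` not satisfied by `φ` is at most
`|Y| − μ(G_Φ)` (stated additively: that number plus `μ(G_Φ)` is at most `|Y|`). -/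
theorem occGraph_assignment_of_vertexCover {Var C : Type*} [Fintype Var] [DecidableEq Var]
    [Fintype C] [DecidableEq C] (n : Var → ℕ) (sgn : (Σ x : Var, Fin (n x)) → Bool)
    (e : C × Bool ≃ (Σ x : Var, Fin (n x)))
    (Y : Finset ((Σ x : Var, Fin (n x)) × Bool))
    (hY : IsVertexCover (occGraph n sgn e) Y) :
    ∃ φ : Var → Bool,
      (univ.filter (fun c : C => ¬ clauseSat n sgn e φ c)).card +
        matchingNumber (occGraph n sgn e) ≤ Y.card :=
  occGraph_assignment_of_vertexCover_general n sgn e Y hY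
end

section
/- Let Φ be a 2-CNF formula in which every clause consists of exactly two (possibly equal) literal occurrences, let G_Φ be its occurrence graph, and let k ≥ 0 be an integer. Then there exists a set X of at most k clauses of Φ whose deletion makes Φ satisfiable if and only if G_Φ has a vertex cover of size at most μ(G_Φ) + k. -/
open Finset

/-!
Every variable gadget `V(x) ∪ V(¬x)` is a complete bipartite graph with a perfect matching, so
`μ(G_Φ)` is the number `N` of literal occurrences, and a vertex cover must contain one whole side
of every gadget. Choosing sides is choosing an assignment `φ`; the chosen sides form a set `T_φ`
of `N` vertices, the vertices of the literals that `φ` makes true. It covers every variable edge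
and the clause edge of every clause satisfied by `φ`, and each further vertex covers at most one
clause edge, since clause edges are pairwise disjoint. Hence a cover of size `N + k` yields an
assignment falsifying at most `k` clauses, and conversely.
-/

theorem IsMatching.two_mul_card_le {V : Type*} [Fintype V] {G : SimpleGraph V}
    {M : Finset (Sym2 V)} (hM : IsMatching G M) : 2 * #M ≤ Fintype.card V := by
  classical
  have hdisj : (M : Set (Sym2 V)).PairwiseDisjoint Sym2.toFinset := fun s hs t ht hst =>
    disjoint_left.2 fun v hvs hvt =>
      hM.2 s hs t ht hst v (Sym2.mem_toFinset.1 hvs) (Sym2.mem_toFinset.1 hvt)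
  calc 2 * #M = ∑ s ∈ M, #s.toFinset := by
        rw [sum_congr rfl fun s hs => Sym2.card_toFinset_of_not_isDiag s
          (G.not_isDiag_of_mem_edgeSet (hM.1 s hs)), sum_const, smul_eq_mul, mul_comm]
    _ = #(M.biUnion Sym2.toFinset) := (card_biUnion hdisj).symm
    _ ≤ Fintype.card V := card_le_univ _

theorem IsMatching.matchingNumber_eq_card {V : Type*} [Fintype V] {G : SimpleGraph V}
    {M : Finset (Sym2 V)} (hM : IsMatching G M) (hperfect : 2 * #M = Fintype.card V) :
    matchingNumber G = #M := by
  have hbdd : ∀ m ∈ {m | ∃ M' : Finset (Sym2 V), IsMatching G M' ∧ #M' = m}, m ≤ #M := by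
    rintro _ ⟨M', hM', rfl⟩
    have := hM'.two_mul_card_le
    omega
  exact le_antisymm (csSup_le ⟨_, M, hM, rfl⟩ hbdd) (le_csSup ⟨_, hbdd⟩ ⟨M, hM, rfl⟩)

section OccurrenceGraph

variable {Var C : Type*} {n : Var → ℕ} {sgn : (Σ x : Var, Fin (n x)) → Bool}
  {e : C × Bool ≃ (Σ x : Var, Fin (n x))}

def litVertex (sgn : (Σ x : Var, Fin (n x)) → Bool) (e : C × Bool ≃ (Σ x : Var, Fin (n x)))
    (p : C × Bool) : (Σ x : Var, Fin (n x)) × Bool :=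
  (e p, sgn (e p))

theorem litVertex_injective : Function.Injective (litVertex sgn e) := fun _ _ h =>
  e.injective (Prod.ext_iff.1 h).1

theorem occGraph_adj_of_fst_eq {u v : (Σ x : Var, Fin (n x)) × Bool} (hx : u.1.1 = v.1.1)
    (hb : u.2 ≠ v.2) : (occGraph n sgn e).Adj u v := by
  rw [occGraph, SimpleGraph.fromRel_adj]
  exact ⟨fun h => hb (congrArg Prod.snd h), Or.inl (Or.inl ⟨hx, hb⟩)⟩

theorem occGraph_adj_litVertex (c : C) :
    (occGraph n sgn e).Adj (litVertex sgn e (c, false)) (litVertex sgn e (c, true)) := by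
  rw [occGraph, SimpleGraph.fromRel_adj]
  exact ⟨fun h => by simpa using litVertex_injective h, Or.inl (Or.inr ⟨c, rfl, rfl⟩)⟩

theorem isVertexCover_occGraph_iff {Y : Finset ((Σ x : Var, Fin (n x)) × Bool)} :
    IsVertexCover (occGraph n sgn e) Y ↔
      (∀ u v : (Σ x : Var, Fin (n x)) × Bool, u.1.1 = v.1.1 → u.2 ≠ v.2 → u ∈ Y ∨ v ∈ Y) ∧
      ∀ c : C, litVertex sgn e (c, false) ∈ Y ∨ litVertex sgn e (c, true) ∈ Y := by
  refine ⟨fun hY => ⟨fun u v hx hb => hY u v (occGraph_adj_of_fst_eq hx hb),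
    fun c => hY _ _ (occGraph_adj_litVertex c)⟩, ?_⟩
  rintro ⟨hvar, hclause⟩ u v huv
  rw [occGraph, SimpleGraph.fromRel_adj] at huv
  rcases huv.2 with (⟨hx, hb⟩ | ⟨c, rfl, rfl⟩) | (⟨hx, hb⟩ | ⟨c, rfl, rfl⟩)
  · exact hvar u v hx hb
  · exact hclause c
  · exact (hvar v u hx hb).symm
  · exact (hclause c).symm

theorem matchingNumber_occGraph [Fintype Var] :
    matchingNumber (occGraph n sgn e) = Fintype.card (Σ x : Var, Fin (n x)) := by
  classical
  let rung : (Σ x : Var, Fin (n x)) ↪ Sym2 ((Σ x : Var, Fin (n x)) × Bool) :=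
    ⟨fun o => s((o, true), (o, false)), fun o o' h => by simpa using h⟩
  have hM : IsMatching (occGraph n sgn e) (univ.map rung) := by
    refine ⟨?_, ?_⟩
    · simp only [mem_map, mem_univ, true_and, forall_exists_index, forall_apply_eq_imp_iff]
      exact fun o => occGraph_adj_of_fst_eq rfl (by simp)
    · simp only [mem_map, mem_univ, true_and]
      rintro _ ⟨o, rfl⟩ _ ⟨o', rfl⟩ hne v hv hv'
      have fst_eq : ∀ {o}, v ∈ rung o → v.1 = o := fun h => by
        rcases Sym2.mem_iff.1 h with rfl | rfl <;> rfl
      exact hne (by rw [← fst_eq hv, fst_eq hv'])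
  rw [hM.matchingNumber_eq_card (by simp [Fintype.card_prod, mul_comm]), card_map, card_univ]

def trueVertices [Fintype Var] (φ : Var → Bool) : Finset ((Σ x : Var, Fin (n x)) × Bool) :=
  univ.map ⟨fun o => (o, φ o.1), fun _ _ h => (Prod.ext_iff.1 h).1⟩

variable [Fintype Var]

theorem mem_trueVertices {φ : Var → Bool} {v : (Σ x : Var, Fin (n x)) × Bool} :
    v ∈ trueVertices φ ↔ v.2 = φ v.1.1 := by
  simp only [trueVertices, mem_map, mem_univ, true_and]
  exact ⟨by rintro ⟨o, rfl⟩; rfl, fun h => ⟨v.1, Prod.ext rfl h.symm⟩⟩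

theorem card_trueVertices (φ : Var → Bool) :
    #(trueVertices (n := n) φ) = Fintype.card (Σ x : Var, Fin (n x)) := by
  simp [trueVertices]

theorem clauseSat_iff_litVertex_mem {φ : Var → Bool} {c : C} :
    clauseSat n sgn e φ c ↔
      litVertex sgn e (c, false) ∈ trueVertices φ ∨ litVertex sgn e (c, true) ∈ trueVertices φ := by
  simp only [clauseSat, mem_trueVertices, litVertex, eq_comm]

theorem isVertexCover_trueVertices_union [DecidableEq Var] {φ : Var → Bool} {X : Finset C}
    (hφ : ∀ c ∉ X, clauseSat n sgn e φ c) :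
    IsVertexCover (occGraph n sgn e)
      (trueVertices φ ∪ X.image fun c => litVertex sgn e (c, false)) := by
  refine isVertexCover_occGraph_iff.2 ⟨fun u v hx hb => ?_, fun c => ?_⟩
  · have hbool : ∀ a b c : Bool, a ≠ b → a = c ∨ b = c := by decide
    simpa only [mem_union, mem_trueVertices, hx] using
      (hbool u.2 v.2 (φ v.1.1) hb).imp Or.inl Or.inl
  · by_cases hc : c ∈ X
    · exact Or.inl (mem_union_right _ (mem_image_of_mem _ hc))
    · exact (clauseSat_iff_litVertex_mem.1 (hφ c hc)).imp (mem_union_left _) (mem_union_left _)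

theorem exists_trueVertices_subset {Y : Finset ((Σ x : Var, Fin (n x)) × Bool)}
    (hY : IsVertexCover (occGraph n sgn e) Y) : ∃ φ : Var → Bool, trueVertices φ ⊆ Y := by
  classical
  refine ⟨fun x => decide (∀ i : Fin (n x), (⟨x, i⟩, true) ∈ Y), fun ⟨⟨x, i⟩, b⟩ hv => ?_⟩
  obtain rfl : b = decide (∀ j : Fin (n x), (⟨x, j⟩, true) ∈ Y) := mem_trueVertices.1 hv
  by_cases hall : ∀ j : Fin (n x), (⟨x, j⟩, true) ∈ Y
  · simp [hall]
  · rw [decide_eq_false hall]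
    obtain ⟨j, hj⟩ := not_forall.1 hall
    exact ((isVertexCover_occGraph_iff.1 hY).1 (⟨x, j⟩, true) (⟨x, i⟩, false) rfl
      Bool.noConfusion).resolve_left hj

theorem card_filter_not_clauseSat_le [DecidableEq Var] [Fintype C]
    {Y : Finset ((Σ x : Var, Fin (n x)) × Bool)}
    (hY : IsVertexCover (occGraph n sgn e) Y) (φ : Var → Bool) :
    #(univ.filter fun c => ¬ clauseSat n sgn e φ c) ≤ #(Y \ trueVertices φ) := by
  have hcover : ∀ c : C, ∃ b, litVertex sgn e (c, b) ∈ Y := fun c =>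
    ((isVertexCover_occGraph_iff.1 hY).2 c).elim (⟨false, ·⟩) (⟨true, ·⟩)
  choose b hb using hcover
  refine card_le_card_of_injOn (fun c => litVertex sgn e (c, b c)) (fun c hc => ?_)
    (fun c _ c' _ h => (Prod.ext_iff.1 (litVertex_injective h)).1)
  replace hc : ¬ clauseSat n sgn e φ c := by simpa using hc
  rw [clauseSat_iff_litVertex_mem, not_or] at hc
  refine mem_sdiff.2 ⟨hb c, show litVertex sgn e (c, b c) ∉ _ from ?_⟩
  cases b c
  exacts [hc.1, hc.2]

end OccurrenceGraph

theorem almostSat_iff_vertexCover_general {Var C : Type*} [Fintype Var]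
    [Fintype C] (n : Var → ℕ) (sgn : (Σ x : Var, Fin (n x)) → Bool)
    (e : C × Bool ≃ (Σ x : Var, Fin (n x))) (k : ℕ) :
    (∃ X : Finset C, X.card ≤ k ∧
      ∃ φ : Var → Bool, ∀ c : C, c ∉ X → clauseSat n sgn e φ c) ↔
    (∃ Y : Finset ((Σ x : Var, Fin (n x)) × Bool),
      IsVertexCover (occGraph n sgn e) Y ∧
      Y.card ≤ matchingNumber (occGraph n sgn e) + k) := by
  classical
  rw [matchingNumber_occGraph]
  constructor
  · rintro ⟨X, hX, φ, hφ⟩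
    refine ⟨_, isVertexCover_trueVertices_union hφ, ?_⟩
    calc _ ≤ #(trueVertices φ) + #(X.image fun c => litVertex sgn e (c, false)) :=
          card_union_le _ _
      _ ≤ _ := by grw [card_trueVertices, card_image_le, hX]
  · rintro ⟨Y, hY, hcard⟩
    obtain ⟨φ, hφY⟩ := exists_trueVertices_subset hY
    refine ⟨univ.filter fun c => ¬ clauseSat n sgn e φ c, ?_, φ, fun c hc => by simpa using hc⟩
    have := card_filter_not_clauseSat_le hY φ
    rw [card_sdiff_of_subset hφY, card_trueVertices] at this
    omega

/-- `Φ` can be made satisfiable by deleting at most `k` clauses if and only if the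
occurrence graph `G_Φ` has a vertex cover of size at most `μ(G_Φ) + k`. -/
theorem almostSat_iff_vertexCover {Var C : Type*} [Fintype Var] [DecidableEq Var]
    [Fintype C] [DecidableEq C] (n : Var → ℕ) (sgn : (Σ x : Var, Fin (n x)) → Bool)
    (e : C × Bool ≃ (Σ x : Var, Fin (n x))) (k : ℕ) :
    (∃ X : Finset C, X.card ≤ k ∧
      ∃ φ : Var → Bool, ∀ c : C, c ∉ X → clauseSat n sgn e φ c) ↔
    (∃ Y : Finset ((Σ x : Var, Fin (n x)) × Bool),
      IsVertexCover (occGraph n sgn e) Y ∧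
      Y.card ≤ matchingNumber (occGraph n sgn e) + k) :=
  almostSat_iff_vertexCover_general n sgn e k
end

section
/- In the multicut instance I' = (G', 𝒯) constructed from a multicoloured graph (G, V₁, …, V_r) with |V_i| ≥ 2 for all i and |V| = n, the assignment d with d_v = d_{v'} = 1/2 for every v ∈ V and d_u = 0 for every other non-terminal vertex u is LP-feasible for the multicut LP-relaxation, and its cost equals n. -/
open Finset

/-- The vertices of the multicut gadget graph `G'` built from a multicoloured graph on
vertex set `V` with `r` colour classes: the original vertices `orig v`, the primed
copies `prime v`, and the degree-one terminals `tv v`, `sv v` (attached to `v`),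
`sv' v` (attached to `v'`), and `av i`, `bv i` (attached to the endpoints of the path
`P i`). -/
inductive GVert (V : Type*) (r : ℕ) where
  | orig (v : V)
  | prime (v : V)
  | tv (v : V)
  | sv (v : V)
  | sv' (v : V)
  | av (i : Fin r)
  | bv (i : Fin r)
  deriving DecidableEq, Fintype

/-- The (asymmetric) base relation of the edges of the multicut gadget graph `G'`.
Here `P : V → Fin r` is the partition into classes `V i = P ⁻¹ {i}`, and for each `i`
the equivalence `ord i : Fin (m i) ≃ {v // P v = i}` fixes an arbitrary order of `V i`,
along which the primed copies of `V i` are connected into the path `P i`. -/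
def gadgetRel {V : Type*} (G : SimpleGraph V) {r : ℕ} (P : V → Fin r) (m : Fin r → ℕ)
    (ord : ∀ i, Fin (m i) ≃ {v : V // P v = i}) :
    GVert V r → GVert V r → Prop
  | .orig u, .orig v => G.Adj u v
  | .orig u, .prime v => u = v
  | .prime u, .prime v => ∃ (i : Fin r) (j : Fin (m i)) (hj : (j : ℕ) + 1 < m i),
      (ord i j : {v : V // P v = i}).1 = u ∧
      (ord i ⟨(j : ℕ) + 1, hj⟩ : {v : V // P v = i}).1 = v
  | .tv u, .orig v => u = v
  | .sv u, .orig v => u = v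
  | .sv' u, .prime v => u = v
  | .av i, .prime v => ∃ h : 0 < m i, (ord i ⟨0, h⟩ : {v : V // P v = i}).1 = v
  | .bv i, .prime v =>
      ∃ h : 0 < m i,
        (ord i ⟨m i - 1, Nat.sub_lt h Nat.one_pos⟩ : {v : V // P v = i}).1 = v
  | _, _ => False

/-- The multicut gadget graph `G'` (the symmetrisation of `gadgetRel`). -/
def gadgetGraph {V : Type*} (G : SimpleGraph V) {r : ℕ} (P : V → Fin r) (m : Fin r → ℕ)
    (ord : ∀ i, Fin (m i) ≃ {v : V // P v = i}) : SimpleGraph (GVert V r) :=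
  SimpleGraph.fromRel (gadgetRel G P m ord)

/-- The set `𝒯` of demand pairs of the multicut instance: all pairs `(t_u, t_v)` for
`u ≠ v`, the pairs `(s_v, s'_v)`, and the pairs `(a_i, b_i)`. -/
def demandPairs (V : Type*) (r : ℕ) : Set (GVert V r × GVert V r) :=
  {p | (∃ u v : V, u ≠ v ∧ p = (.tv u, .tv v)) ∨
       (∃ v : V, p = (.sv v, .sv' v)) ∨
       (∃ i : Fin r, p = (.av i, .bv i))}

/-- The non-terminal vertices of `G'` are the original and the primed vertices. -/
def nonTerminal {V : Type*} {r : ℕ} : GVert V r → Bool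
  | .orig _ => true
  | .prime _ => true
  | _ => false

/-- `Y` is a multicut for `(G', 𝒯)`: `Y` consists of non-terminal vertices and every
path in `G'` between the two vertices of a demand pair contains a vertex of `Y`
(equivalently, removing `Y` disconnects every demand pair). -/
def IsMulticut {V : Type*} {r : ℕ} (H : SimpleGraph (GVert V r))
    (D : Set (GVert V r × GVert V r)) (Y : Finset (GVert V r)) : Prop :=
  (∀ y ∈ Y, nonTerminal y = true) ∧
  ∀ ⦃s t : GVert V r⦄, (s, t) ∈ D →
    ∀ p : H.Walk s t, p.IsPath → ∃ v ∈ p.support, v ∈ Y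

/-- `d` is an LP-feasible assignment for the multicut LP-relaxation of `(G', 𝒯)`:
`d` is nonnegative on non-terminal vertices and for every demand pair and every path
between its two vertices, the sum of `d` over the non-terminal vertices of the path is
at least `1`. -/
def LPFeasibleMulticut {V : Type*} [DecidableEq V] {r : ℕ} (H : SimpleGraph (GVert V r))
    (D : Set (GVert V r × GVert V r)) (d : GVert V r → ℝ) : Prop :=
  (∀ v, nonTerminal v = true → 0 ≤ d v) ∧
  ∀ ⦃s t : GVert V r⦄, (s, t) ∈ D → ∀ p : H.Walk s t, p.IsPath →
    1 ≤ ∑ v ∈ p.support.toFinset.filter (fun v => nonTerminal v = true), d v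

/-- The cost of a multicut LP assignment: the sum of `d` over all non-terminal
vertices. -/
def multicutLPCost {V : Type*} [Fintype V] [DecidableEq V] {r : ℕ}
    (d : GVert V r → ℝ) : ℝ :=
  ∑ v ∈ univ.filter (fun v : GVert V r => nonTerminal v = true), d v

/-!
Every demand pair consists of two pendant terminals hanging on two distinct non-terminals
(for `(a_i, b_i)` these are the two ends of the path `P_i`, distinct because `|V_i| ≥ 2`).
Any path between the terminals must pass through both, so it collects `1/2 + 1/2`.
The cost is `1/2` times the number `2n` of non-terminals.
-/

namespace SimpleGraph.Walk

variable {α : Type*} {H : SimpleGraph α}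

lemma mem_support_of_forall_adj_eq {s t x y : α} (p : H.Walk s t) (hst : s ≠ t)
    (hs : ∀ w, H.Adj s w → w = x) (ht : ∀ w, H.Adj w t → w = y) :
    x ∈ p.support ∧ y ∈ p.support := by
  have hp : ¬p.Nil := not_nil_of_ne hst
  exact ⟨hs _ (adj_snd hp) ▸ p.getVert_mem_support 1,
    ht _ (adj_penultimate hp) ▸ p.getVert_mem_support _⟩

end SimpleGraph.Walk

section Gadget

variable {V : Type*} {G : SimpleGraph V} {r : ℕ} {P : V → Fin r} {m : Fin r → ℕ}
    {ord : ∀ i, Fin (m i) ≃ {v : V // P v = i}} {w : GVert V r}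

lemma gadgetGraph_adj_tv_iff {u : V} :
    (gadgetGraph G P m ord).Adj (.tv u) w ↔ w = .orig u := by
  cases w <;> simp [gadgetGraph, gadgetRel, eq_comm]

lemma gadgetGraph_adj_sv_iff {u : V} :
    (gadgetGraph G P m ord).Adj (.sv u) w ↔ w = .orig u := by
  cases w <;> simp [gadgetGraph, gadgetRel, eq_comm]

lemma gadgetGraph_adj_sv'_iff {u : V} :
    (gadgetGraph G P m ord).Adj w (.sv' u) ↔ w = .prime u := by
  cases w <;> simp [gadgetGraph, gadgetRel, eq_comm]

lemma gadgetGraph_adj_av_iff {i : Fin r} (hi : 0 < m i) :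
    (gadgetGraph G P m ord).Adj (.av i) w ↔ w = .prime (ord i ⟨0, hi⟩).1 := by
  cases w <;> simp [gadgetGraph, gadgetRel, eq_comm, hi]

lemma gadgetGraph_adj_bv_iff {i : Fin r} (hi : 0 < m i) :
    (gadgetGraph G P m ord).Adj w (.bv i) ↔
      w = .prime (ord i ⟨m i - 1, Nat.sub_lt hi Nat.one_pos⟩).1 := by
  cases w <;> simp [gadgetGraph, gadgetRel, eq_comm, hi]

lemma demandPairs_separated (hm : ∀ i, 2 ≤ m i) {s t : GVert V r}
    (h : (s, t) ∈ demandPairs V r) :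
    s ≠ t ∧ ∃ x y : GVert V r, x ≠ y ∧ nonTerminal x ∧ nonTerminal y ∧
      (∀ w, (gadgetGraph G P m ord).Adj s w → w = x) ∧
      ∀ w, (gadgetGraph G P m ord).Adj w t → w = y := by
  rcases h with ⟨u, v, huv, hst⟩ | ⟨v, hst⟩ | ⟨i, hst⟩ <;>
    obtain ⟨rfl, rfl⟩ := Prod.mk.inj hst
  · exact ⟨by simpa using huv, .orig u, .orig v, by simpa using huv, rfl, rfl,
      fun _ ↦ gadgetGraph_adj_tv_iff.mp, fun _ h ↦ gadgetGraph_adj_tv_iff.mp h.symm⟩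
  · exact ⟨by simp, .orig v, .prime v, by simp, rfl, rfl,
      fun _ ↦ gadgetGraph_adj_sv_iff.mp, fun _ ↦ gadgetGraph_adj_sv'_iff.mp⟩
  · have hi : 0 < m i := by have := hm i; omega
    have hends : (ord i ⟨0, hi⟩).1 ≠ (ord i ⟨m i - 1, Nat.sub_lt hi Nat.one_pos⟩).1 := by
      intro h
      have h0 : 0 = m i - 1 := congrArg Fin.val ((ord i).injective (Subtype.ext h))
      have := hm i
      omega
    exact ⟨by simp, _, _, by simpa using hends, rfl, rfl,
      fun _ ↦ (gadgetGraph_adj_av_iff hi).mp, fun _ ↦ (gadgetGraph_adj_bv_iff hi).mp⟩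

end Gadget

noncomputable def halfAssignment {V : Type*} {r : ℕ} (v : GVert V r) : ℝ :=
  if nonTerminal v = true then 1 / 2 else 0

section HalfAssignment

variable {V : Type*} {r : ℕ}

lemma one_le_sum_halfAssignment {S : Finset (GVert V r)} {x y : GVert V r}
    (hx : x ∈ S) (hy : y ∈ S) (hxy : x ≠ y) (hxn : nonTerminal x) (hyn : nonTerminal y) :
    1 ≤ ∑ v ∈ S.filter (fun v => nonTerminal v = true), halfAssignment v := by
  classical
  calc 1 = ∑ v ∈ {x, y}, halfAssignment v := by
        rw [sum_pair hxy, halfAssignment, halfAssignment, if_pos hxn, if_pos hyn]; norm_num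
    _ ≤ _ := sum_le_sum_of_subset_of_nonneg (by grind)
        fun v _ _ ↦ by unfold halfAssignment; positivity

lemma lpFeasibleMulticut_halfAssignment [DecidableEq V] (H : SimpleGraph (GVert V r))
    (D : Set (GVert V r × GVert V r))
    (hD : ∀ ⦃s t⦄, (s, t) ∈ D → s ≠ t ∧ ∃ x y : GVert V r, x ≠ y ∧ nonTerminal x ∧
      nonTerminal y ∧ (∀ w, H.Adj s w → w = x) ∧ ∀ w, H.Adj w t → w = y) :
    LPFeasibleMulticut H D halfAssignment := by
  refine ⟨fun v hv ↦ by simp [halfAssignment, hv], fun s t hst p _ ↦ ?_⟩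
  obtain ⟨hne, x, y, hxy, hxn, hyn, hs, ht⟩ := hD hst
  obtain ⟨hx, hy⟩ := p.mem_support_of_forall_adj_eq hne hs ht
  exact one_le_sum_halfAssignment (List.mem_toFinset.mpr hx) (List.mem_toFinset.mpr hy)
    hxy hxn hyn

lemma card_filter_nonTerminal [Fintype V] :
    #(univ.filter (fun v : GVert V r => nonTerminal v = true)) = 2 * Fintype.card V := by
  have : univ.filter (fun v : GVert V r => nonTerminal v = true) =
      (univ.map ⟨.orig, fun _ _ h ↦ by cases h; rfl⟩).disjUnion
        (univ.map ⟨.prime, fun _ _ h ↦ by cases h; rfl⟩) (by simp [disjoint_left]) := by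
    ext x
    cases x <;> simp only [mem_filter, mem_univ, true_and, mem_disjUnion, mem_map] <;>
      simp [nonTerminal] <;> exact ⟨_, rfl⟩
  rw [this, card_disjUnion, card_map, card_map, card_univ, two_mul]

lemma multicutLPCost_halfAssignment [Fintype V] [DecidableEq V] :
    multicutLPCost (halfAssignment : GVert V r → ℝ) = Fintype.card V := by
  rw [multicutLPCost, sum_congr rfl fun v hv ↦
    show halfAssignment v = 1 / 2 from if_pos (mem_filter.mp hv).2, sum_const,
    card_filter_nonTerminal]
  ring

end HalfAssignment

theorem multicut_half_assignment_feasible_general {V : Type*} [Fintype V] [DecidableEq V]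
    (G : SimpleGraph V) {r : ℕ} (P : V → Fin r) (m : Fin r → ℕ)
    (ord : ∀ i, Fin (m i) ≃ {v : V // P v = i})
    (hm : ∀ i, 2 ≤ m i) :
    LPFeasibleMulticut (gadgetGraph G P m ord) (demandPairs V r)
      (fun v => if nonTerminal v = true then (1 : ℝ) / 2 else 0) ∧
    multicutLPCost (fun v : GVert V r => if nonTerminal v = true then (1 : ℝ) / 2 else 0)
      = Fintype.card V :=
  ⟨lpFeasibleMulticut_halfAssignment _ _ fun _ _ ↦ demandPairs_separated hm,
    multicutLPCost_halfAssignment⟩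

/-- In the multicut instance `(G', 𝒯)` built from a multicoloured graph
`(G, V₁, …, V_r)` with `|V_i| ≥ 2`, the assignment giving `1/2` to every vertex `v` and
every primed vertex `v'` (i.e. to every non-terminal vertex) and `0` elsewhere is
LP-feasible for the multicut LP-relaxation and has cost `n = |V|`. -/
theorem multicut_half_assignment_feasible {V : Type*} [Fintype V] [DecidableEq V]
    (G : SimpleGraph V) {r : ℕ} (P : V → Fin r) (m : Fin r → ℕ)
    (ord : ∀ i, Fin (m i) ≃ {v : V // P v = i})
    (hclique : ∀ u v : V, u ≠ v → P u = P v → G.Adj u v)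
    (hm : ∀ i, 2 ≤ m i) :
    LPFeasibleMulticut (gadgetGraph G P m ord) (demandPairs V r)
      (fun v => if nonTerminal v = true then (1 : ℝ) / 2 else 0) ∧
    multicutLPCost (fun v : GVert V r => if nonTerminal v = true then (1 : ℝ) / 2 else 0)
      = Fintype.card V :=
  multicut_half_assignment_feasible_general G P m ord hm
end

section
/- Let I' = (G', 𝒯) be the multicut instance constructed from a multicoloured graph (G, V₁, …, V_r) with |V_i| ≥ 2 for all i and |V| = n. Suppose X ⊆ V is an independent set of G with |X ∩ V_i| = 1 for every 1 ≤ i ≤ r (equivalently, an independent set of size r). Then Y = (V ∖ X) ∪ { v' : v ∈ X } is a multicut of I', that is, Y consists of non-terminal vertices and removing Y from G' disconnects every pair in 𝒯; moreover |Y| = n. -/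
open Finset

/-
Map every vertex of `G'` to a representative of its connected component in `G' - Y` and check
that this map is constant along the edges of `G' - Y`. For `v ∈ X` all neighbours of `v` other
than `t_v`, `s_v` lie in `Y` by independence, and `s'_v` is isolated. Each path `P_i` is cut at
the primed copies of `X ∩ V_i`; a surviving `v'` is labelled `a_i` if a cut point follows it and
`b_i` otherwise. This label is constant between consecutive cut points, and it separates `a_i`
from `b_i` because `V_i` meets `X`. The two ends of every demand pair get different labels, so
every path between them meets `Y`.
-/

theorem SimpleGraph.Walk.exists_mem_support_mem_of_apply_ne {W α : Type*} {H : SimpleGraph W}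
    {Y : Set W} {f : W → α} (hf : ∀ a b, H.Adj a b → a ∉ Y → b ∉ Y → f a = f b)
    {s t : W} (p : H.Walk s t) (hst : f s ≠ f t) : ∃ v ∈ p.support, v ∈ Y := by
  obtain ⟨d, hd, hfst, hsnd⟩ := p.exists_boundary_dart {w | f w = f s} rfl hst.symm
  by_contra! hY
  exact hsnd ((hf _ _ d.adj (hY _ (p.dart_fst_mem_support_of_mem_darts hd))
    (hY _ (p.dart_snd_mem_support_of_mem_darts hd))).symm.trans hfst)

section PathIndex

variable {V : Type*} {r : ℕ} {P : V → Fin r} {m : Fin r → ℕ}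
  (ord : ∀ i, Fin (m i) ≃ {v : V // P v = i})

def pathIndex (v : V) : ℕ := (ord (P v)).symm ⟨v, rfl⟩

variable {ord}

theorem pathIndex_eq {i : Fin r} {v : V} (hv : P v = i) :
    pathIndex ord v = (ord i).symm ⟨v, hv⟩ := by
  subst hv; rfl

theorem pathIndex_lt (v : V) : pathIndex ord v < m (P v) :=
  Fin.isLt _

@[simp]
theorem pathIndex_apply (i : Fin r) (j : Fin (m i)) : pathIndex ord (ord i j) = j := by
  simp [pathIndex_eq (ord i j).2]

theorem eq_of_pathIndex_eq {u v : V} (hP : P u = P v) (h : pathIndex ord u = pathIndex ord v) :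
    u = v := by
  rw [pathIndex_eq hP, pathIndex_eq rfl, Fin.val_inj, Equiv.apply_eq_iff_eq] at h
  exact congrArg Subtype.val h

end PathIndex

section Gadget

variable {V : Type*} {r : ℕ} {P : V → Fin r} {m : Fin r → ℕ}
  (ord : ∀ i, Fin (m i) ≃ {v : V // P v = i}) (X : Finset V)

def pathSide (v : V) : GVert V r :=
  if ∃ w ∈ X, P w = P v ∧ pathIndex ord v < pathIndex ord w then .av (P v) else .bv (P v)

def componentRep [DecidableEq V] : GVert V r → GVert V r
  | .orig v | .tv v | .sv v => .orig v
  | .prime v => pathSide ord X v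
  | .sv' v => if v ∈ X then .sv' v else pathSide ord X v
  | .av i => .av i
  | .bv i => .bv i

def independentSetCut [Fintype V] [DecidableEq V] : Finset (GVert V r) :=
  (univ \ X).image GVert.orig ∪ X.image GVert.prime

variable {ord X}

theorem pathSide_succ {i : Fin r} (j : Fin (m i)) (hj : (j : ℕ) + 1 < m i)
    (hX : ((ord i ⟨j + 1, hj⟩ : {v // P v = i}) : V) ∉ X) :
    pathSide ord X (ord i j) = pathSide ord X (ord i ⟨j + 1, hj⟩) := by
  have hcut : ∀ w ∈ X, P w = i → pathIndex ord w ≠ j + 1 := by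
    rintro w hw hPw hpos
    obtain rfl : w = ord i ⟨j + 1, hj⟩ := eq_of_pathIndex_eq (hPw.trans (ord i _).2.symm)
      (hpos.trans (pathIndex_apply i ⟨j + 1, hj⟩).symm)
    exact hX hw
  simp only [pathSide, pathIndex_apply, (ord i j).2, (ord i ⟨j + 1, hj⟩).2]
  refine if_congr (exists_congr fun w => and_congr_right fun hw =>
    and_congr_right fun hPw => ?_) rfl rfl
  have := hcut w hw hPw
  omega

theorem pathSide_first {i : Fin r} (hi : ∃ w ∈ X, P w = i) (h0 : 0 < m i)
    (hX : ((ord i ⟨0, h0⟩ : {v // P v = i}) : V) ∉ X) :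
    pathSide ord X (ord i ⟨0, h0⟩) = .av i := by
  simp only [pathSide, pathIndex_apply, (ord i ⟨0, h0⟩).2]
  obtain ⟨w, hw, hPw⟩ := hi
  refine if_pos ⟨w, hw, hPw, Nat.pos_of_ne_zero fun hpos => hX ?_⟩
  obtain rfl : w = ord i ⟨0, h0⟩ := eq_of_pathIndex_eq (hPw.trans (ord i _).2.symm)
    (hpos.trans (pathIndex_apply i ⟨0, h0⟩).symm)
  exact hw

theorem pathSide_last {i : Fin r} (h0 : 0 < m i) :
    pathSide ord X (ord i ⟨m i - 1, Nat.sub_lt h0 Nat.one_pos⟩) = .bv i := by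
  simp only [pathSide, pathIndex_apply, (ord i _).2]
  refine if_neg ?_
  rintro ⟨w, -, rfl, hlt⟩
  have := pathIndex_lt (ord := ord) w
  omega

theorem componentRep_ne_of_mem_demandPairs [DecidableEq V] {s t : GVert V r}
    (hst : (s, t) ∈ demandPairs V r) : componentRep ord X s ≠ componentRep ord X t := by
  rcases hst with ⟨u, v, huv, h⟩ | ⟨v, h⟩ | ⟨i, h⟩ <;> obtain ⟨rfl, rfl⟩ := Prod.mk.inj h
  · simpa [componentRep] using huv
  · simp only [componentRep, pathSide]
    split_ifs <;> simp
  · simp [componentRep]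

section Cut

variable [Fintype V] [DecidableEq V]

@[simp]
theorem orig_mem_independentSetCut {v : V} :
    GVert.orig v ∈ independentSetCut (r := r) X ↔ v ∉ X := by
  simp [independentSetCut]

@[simp]
theorem prime_mem_independentSetCut {v : V} :
    GVert.prime v ∈ independentSetCut (r := r) X ↔ v ∈ X := by
  simp [independentSetCut]

theorem componentRep_eq_of_gadgetRel {G : SimpleGraph V}
    (hind : ∀ u ∈ X, ∀ v ∈ X, u ≠ v → ¬ G.Adj u v) (hcover : ∀ i, ∃ w ∈ X, P w = i)
    {a b : GVert V r} (hab : gadgetRel G P m ord a b)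
    (ha : a ∉ independentSetCut X) (hb : b ∉ independentSetCut X) :
    componentRep ord X a = componentRep ord X b := by
  cases a <;> cases b <;> try exact (hab : False).elim
  case orig.orig u v =>
    simp only [orig_mem_independentSetCut, not_not] at ha hb
    exact (hind u ha v hb (hab : G.Adj u v).ne hab).elim
  case orig.prime u v =>
    obtain rfl : u = v := hab
    simp only [orig_mem_independentSetCut, prime_mem_independentSetCut, not_not] at ha hb
    exact (hb ha).elim
  case prime.prime u v =>
    obtain ⟨i, j, hj, rfl, rfl⟩ := hab
    rw [prime_mem_independentSetCut] at hb
    exact pathSide_succ j hj hb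
  case tv.orig u v | sv.orig u v =>
    obtain rfl : u = v := hab
    rfl
  case sv'.prime u v =>
    obtain rfl : u = v := hab
    rw [prime_mem_independentSetCut] at hb
    simp [componentRep, hb]
  case av.prime i v =>
    obtain ⟨h0, rfl⟩ := hab
    rw [prime_mem_independentSetCut] at hb
    exact (pathSide_first (hcover i) h0 hb).symm
  case bv.prime i v =>
    obtain ⟨h0, rfl⟩ := hab
    exact (pathSide_last h0).symm

theorem nonTerminal_of_mem_independentSetCut {y : GVert V r} (hy : y ∈ independentSetCut X) :
    nonTerminal y = true := by
  simp only [independentSetCut, mem_union, mem_image] at hy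
  rcases hy with ⟨v, -, rfl⟩ | ⟨v, -, rfl⟩ <;> rfl

theorem card_independentSetCut : (independentSetCut (r := r) X).card = Fintype.card V := by
  have hdisj : Disjoint ((univ \ X).image (GVert.orig (r := r))) (X.image GVert.prime) := by
    simp [disjoint_left]
  rw [independentSetCut, card_union_of_disjoint hdisj,
    card_image_of_injective _ fun _ _ => GVert.orig.inj,
    card_image_of_injective _ fun _ _ => GVert.prime.inj, card_univ_sdiff]
  have := card_le_univ X
  omega

theorem isMulticut_independentSetCut {G : SimpleGraph V}
    (hind : ∀ u ∈ X, ∀ v ∈ X, u ≠ v → ¬ G.Adj u v) (hcover : ∀ i, ∃ w ∈ X, P w = i) :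
    IsMulticut (gadgetGraph G P m ord) (demandPairs V r) (independentSetCut X) := by
  refine ⟨fun y hy => nonTerminal_of_mem_independentSetCut hy, fun s t hst p _ => ?_⟩
  refine p.exists_mem_support_mem_of_apply_ne (Y := ↑(independentSetCut (r := r) X))
    (f := componentRep ord X) ?_ (componentRep_ne_of_mem_demandPairs hst)
  intro a b hab ha hb
  rcases ((SimpleGraph.fromRel_adj _ _ _).mp hab).2 with h | h
  · exact componentRep_eq_of_gadgetRel hind hcover h ha hb
  · exact (componentRep_eq_of_gadgetRel hind hcover h hb ha).symm

end Cut

end Gadget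

theorem multicut_of_independentSet_general {V : Type*} [Fintype V] [DecidableEq V]
    (G : SimpleGraph V) {r : ℕ} (P : V → Fin r) (m : Fin r → ℕ)
    (ord : ∀ i, Fin (m i) ≃ {v : V // P v = i})
    (X : Finset V)
    (hind : ∀ u ∈ X, ∀ v ∈ X, u ≠ v → ¬ G.Adj u v)
    (hone : ∀ i : Fin r, (X.filter (fun v => P v = i)).card = 1)
    (Y : Finset (GVert V r))
    (hY : Y = (univ \ X).image GVert.orig ∪ X.image GVert.prime) :
    IsMulticut (gadgetGraph G P m ord) (demandPairs V r) Y ∧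
    Y.card = Fintype.card V := by
  have hcover : ∀ i, ∃ w ∈ X, P w = i := fun i => by
    obtain ⟨w, hw⟩ := card_pos.mp ((hone i).symm ▸ Nat.one_pos)
    exact ⟨w, mem_filter.mp hw⟩
  subst hY
  exact ⟨isMulticut_independentSetCut hind hcover, card_independentSetCut⟩

/-- If `X` is an independent set of `G` meeting every colour class `V_i` in exactly one
vertex (equivalently, an independent set of size `r`), then
`Y = {orig v : v ∉ X} ∪ {prime v : v ∈ X}` is a multicut of the instance `(G', 𝒯)`,
and `|Y| = n = |V|`. -/
theorem multicut_of_independentSet {V : Type*} [Fintype V] [DecidableEq V]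
    (G : SimpleGraph V) {r : ℕ} (P : V → Fin r) (m : Fin r → ℕ)
    (ord : ∀ i, Fin (m i) ≃ {v : V // P v = i})
    (hclique : ∀ u v : V, u ≠ v → P u = P v → G.Adj u v)
    (hm : ∀ i, 2 ≤ m i)
    (X : Finset V)
    (hind : ∀ u ∈ X, ∀ v ∈ X, u ≠ v → ¬ G.Adj u v)
    (hone : ∀ i : Fin r, (X.filter (fun v => P v = i)).card = 1)
    (Y : Finset (GVert V r))
    (hY : Y = (univ \ X).image GVert.orig ∪ X.image GVert.prime) :
    IsMulticut (gadgetGraph G P m ord) (demandPairs V r) Y ∧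
    Y.card = Fintype.card V :=
  multicut_of_independentSet_general G P m ord X hind hone Y hY
end

section
/- Let I' = (G', 𝒯) be the multicut instance constructed from a multicoloured graph (G, V₁, …, V_r) with |V_i| ≥ 2 for all i and |V| = n. Suppose Y is a multicut of I' with |Y| ≤ n. Then there exist vertices v₁ ∈ V₁, …, v_r ∈ V_r such that {v₁, …, v_r} is an independent set of G of size r; moreover |Y| = n and, for each i, (V_i ∖ {v_i}) ∪ {v_i'} ⊆ Y. -/
open Finset

/- The demand pairs `(s_v, s'_v)` force `v` or `v'` into `Y` for every `v`, so
`|Y| ≤ n` leaves room for exactly one of the two, and `|Y| = n`. The pair `(a_i, b_i)`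
forces some `v_i'` into `Y`, hence `v_i ∉ Y`. The pairs `(t_u, t_v)` force an endpoint of
every edge of `G` into `Y`, so the `v_i` are pairwise non-adjacent and, `V_i` being a
clique, every other vertex of `V_i` lies in `Y`. -/

theorem Finset.card_eq_and_not_both_of_forall_mem_or_mem {α V : Type*} [Fintype V]
    {f g : V → α} (hf : Function.Injective f) (hg : Function.Injective g)
    (hfg : ∀ u v, f u ≠ g v) {Y : Finset α} (hcover : ∀ v, f v ∈ Y ∨ g v ∈ Y)
    (hcard : #Y ≤ Fintype.card V) :
    #Y = Fintype.card V ∧ ∀ v, f v ∈ Y → g v ∉ Y := by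
  classical
  set A := univ.filter fun v => f v ∈ Y
  set B := univ.filter fun v => g v ∈ Y
  have hunion : A ∪ B = univ := by ext v; simpa [A, B] using hcover v
  have hdisj : Disjoint (A.image f) (B.image g) := by
    simp only [disjoint_left, mem_image]
    rintro _ ⟨u, -, rfl⟩ ⟨v, -, huv⟩
    exact hfg u v huv.symm
  have hsub : A.image f ∪ B.image g ⊆ Y := by
    simp only [union_subset_iff, image_subset_iff, A, B, mem_filter]
    exact ⟨fun _ h => h.2, fun _ h => h.2⟩
  have hAB : #A + #B ≤ #Y := by
    rw [← card_image_of_injective A hf, ← card_image_of_injective B hg,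
      ← card_union_of_disjoint hdisj]
    exact card_le_card hsub
  have hsum := card_union_add_card_inter A B
  rw [hunion, card_univ] at hsum
  have hinter : A ∩ B = ∅ := card_eq_zero.1 (by omega)
  refine ⟨by omega, fun v hfv hgv => ?_⟩
  have hv : v ∈ A ∩ B := by simp [A, B, hfv, hgv]
  simp [hinter] at hv

namespace IsMulticut

variable {V : Type*} {r : ℕ} {H : SimpleGraph (GVert V r)} {D : Set (GVert V r × GVert V r)}
  {Y : Finset (GVert V r)}

theorem notMem (hY : IsMulticut H D Y) {x : GVert V r} (hx : nonTerminal x = false) :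
    x ∉ Y :=
  fun h => by simpa [hx] using hY.1 x h

theorem exists_mem_support (hY : IsMulticut H D Y) {s t : GVert V r} (hst : (s, t) ∈ D)
    (p : H.Walk s t) : ∃ x ∈ p.support, x ∈ Y := by
  classical
  obtain ⟨x, hx, hxY⟩ := hY.2 hst p.toPath p.toPath.2
  exact ⟨x, p.support_toPath_subset_support hx, hxY⟩

theorem mem_or_mem_of_adj_adj_adj (hY : IsMulticut H D Y) {s x y t : GVert V r}
    (hst : (s, t) ∈ D) (hs : nonTerminal s = false) (ht : nonTerminal t = false)
    (hsx : H.Adj s x) (hxy : H.Adj x y) (hyt : H.Adj y t) : x ∈ Y ∨ y ∈ Y := by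
  obtain ⟨z, hz, hzY⟩ := hY.exists_mem_support hst (.cons hsx (.cons hxy (.cons hyt .nil)))
  simp only [SimpleGraph.Walk.support_cons, SimpleGraph.Walk.support_nil, List.mem_cons,
    List.not_mem_nil, or_false] at hz
  rcases hz with rfl | rfl | rfl | rfl
  · exact absurd hzY (hY.notMem hs)
  · exact .inl hzY
  · exact .inr hzY
  · exact absurd hzY (hY.notMem ht)

end IsMulticut

section Gadget

variable {V : Type*} {G : SimpleGraph V} {r : ℕ} {P : V → Fin r} {m : Fin r → ℕ}
  {ord : ∀ i, Fin (m i) ≃ {v : V // P v = i}}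

theorem gadgetGraph_adj_of_rel {a b : GVert V r} (hne : a ≠ b)
    (h : gadgetRel G P m ord a b) : (gadgetGraph G P m ord).Adj a b :=
  (SimpleGraph.fromRel_adj _ _ _).2 ⟨hne, .inl h⟩

theorem exists_walk_av_prime (i : Fin r) (j : ℕ) (hj : j < m i) :
    ∃ p : (gadgetGraph G P m ord).Walk (.av i) (.prime (ord i ⟨j, hj⟩).1),
      ∀ x ∈ p.support, x = .av i ∨ ∃ w, P w = i ∧ x = .prime w := by
  induction j with
  | zero =>
    have hfirst : (gadgetGraph G P m ord).Adj (.av i) (.prime (ord i ⟨0, hj⟩).1) :=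
      gadgetGraph_adj_of_rel (by simp) ⟨hj, rfl⟩
    refine ⟨.cons hfirst .nil, ?_⟩
    simp only [SimpleGraph.Walk.support_cons, SimpleGraph.Walk.support_nil, List.mem_cons,
      List.not_mem_nil, or_false]
    rintro x (rfl | rfl)
    · exact .inl rfl
    · exact .inr ⟨_, (ord i _).2, rfl⟩
  | succ j ih =>
    obtain ⟨p, hp⟩ := ih (by omega)
    have hne : (GVert.prime (ord i ⟨j, by omega⟩).1 : GVert V r) ≠
        .prime (ord i ⟨j + 1, hj⟩).1 := by
      simp [Subtype.ext_iff.symm, Fin.ext_iff]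
    refine ⟨p.concat (gadgetGraph_adj_of_rel hne ⟨i, ⟨j, by omega⟩, hj, rfl, rfl⟩), ?_⟩
    simp only [SimpleGraph.Walk.support_concat, List.mem_append, List.mem_singleton]
    rintro x (hx | rfl)
    · exact hp x hx
    · exact .inr ⟨_, (ord i _).2, rfl⟩

variable {Y : Finset (GVert V r)}

namespace IsMulticut

theorem orig_mem_or_prime_mem (hY : IsMulticut (gadgetGraph G P m ord) (demandPairs V r) Y)
    (v : V) : .orig v ∈ Y ∨ .prime v ∈ Y := by
  have h₁ : (gadgetGraph G P m ord).Adj (.sv v) (.orig v) := gadgetGraph_adj_of_rel (by simp) rfl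
  have h₂ : (gadgetGraph G P m ord).Adj (.orig v) (.prime v) :=
    gadgetGraph_adj_of_rel (by simp) rfl
  have h₃ : (gadgetGraph G P m ord).Adj (.sv' v) (.prime v) :=
    gadgetGraph_adj_of_rel (by simp) rfl
  exact hY.mem_or_mem_of_adj_adj_adj (.inr (.inl ⟨v, rfl⟩)) rfl rfl h₁ h₂ h₃.symm

theorem orig_mem_or_orig_mem_of_adj
    (hY : IsMulticut (gadgetGraph G P m ord) (demandPairs V r) Y) {u v : V}
    (huv : G.Adj u v) : .orig u ∈ Y ∨ .orig v ∈ Y := by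
  have h₁ : (gadgetGraph G P m ord).Adj (.tv u) (.orig u) := gadgetGraph_adj_of_rel (by simp) rfl
  have h₂ : (gadgetGraph G P m ord).Adj (.orig u) (.orig v) :=
    gadgetGraph_adj_of_rel (by simp [huv.ne]) huv
  have h₃ : (gadgetGraph G P m ord).Adj (.tv v) (.orig v) := gadgetGraph_adj_of_rel (by simp) rfl
  exact hY.mem_or_mem_of_adj_adj_adj (.inl ⟨u, v, huv.ne, rfl⟩) rfl rfl h₁ h₂ h₃.symm

theorem exists_prime_mem (hY : IsMulticut (gadgetGraph G P m ord) (demandPairs V r) Y)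
    {i : Fin r} (hi : 0 < m i) : ∃ w, P w = i ∧ .prime w ∈ Y := by
  obtain ⟨p, hp⟩ := exists_walk_av_prime (G := G) (ord := ord) i (m i - 1) (by omega)
  have hlast : (gadgetGraph G P m ord).Adj (.bv i) (.prime (ord i ⟨m i - 1, _⟩).1) :=
    gadgetGraph_adj_of_rel (by simp) ⟨hi, rfl⟩
  obtain ⟨x, hx, hxY⟩ := hY.exists_mem_support (.inr (.inr ⟨i, rfl⟩)) (p.concat hlast.symm)
  simp only [SimpleGraph.Walk.support_concat, List.mem_append, List.mem_singleton] at hx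
  rcases hx with hx | rfl
  · rcases hp x hx with rfl | ⟨w, hw, rfl⟩
    · exact absurd hxY (hY.notMem rfl)
    · exact ⟨w, hw, hxY⟩
  · exact absurd hxY (hY.notMem rfl)

end IsMulticut

end Gadget

theorem independentSet_of_multicut_general {V : Type*} [Fintype V]
    (G : SimpleGraph V) {r : ℕ} (P : V → Fin r) (m : Fin r → ℕ)
    (ord : ∀ i, Fin (m i) ≃ {v : V // P v = i})
    (hclique : ∀ u v : V, u ≠ v → P u = P v → G.Adj u v)
    (hm : ∀ i, 2 ≤ m i)
    (Y : Finset (GVert V r))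
    (hY : IsMulticut (gadgetGraph G P m ord) (demandPairs V r) Y)
    (hcard : Y.card ≤ Fintype.card V) :
    ∃ v : Fin r → V,
      (∀ i, P (v i) = i) ∧
      Function.Injective v ∧
      (∀ i j, i ≠ j → ¬ G.Adj (v i) (v j)) ∧
      Y.card = Fintype.card V ∧
      (∀ i, GVert.prime (v i) ∈ Y) ∧
      (∀ i, ∀ u : V, P u = i → u ≠ v i → GVert.orig u ∈ Y) := by
  obtain ⟨hYcard, hexclusive⟩ := Finset.card_eq_and_not_both_of_forall_mem_or_mem
    (f := GVert.orig (r := r)) (g := GVert.prime) (fun _ _ h => GVert.orig.inj h)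
    (fun _ _ h => GVert.prime.inj h) (fun _ _ h => by cases h)
    hY.orig_mem_or_prime_mem hcard
  choose v hvP hvY using fun i => hY.exists_prime_mem (Nat.lt_of_lt_of_le Nat.zero_lt_two (hm i))
  have hv_not_mem : ∀ i, .orig (v i) ∉ Y := fun i h => hexclusive _ h (hvY i)
  refine ⟨v, hvP, Function.LeftInverse.injective hvP, fun i j _ hadj => ?_, hYcard, hvY,
    fun i u hu hne => ?_⟩
  · exact (hY.orig_mem_or_orig_mem_of_adj hadj).elim (hv_not_mem i) (hv_not_mem j)
  · exact (hY.orig_mem_or_orig_mem_of_adj (hclique u (v i) hne (by rw [hu, hvP]))).resolve_right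
      (hv_not_mem i)

/-- If `Y` is a multicut of the instance `(G', 𝒯)` with `|Y| ≤ n = |V|`, then there are
vertices `v i ∈ V_i` forming an independent set of `G` of size `r`; moreover `|Y| = n`
and, for each `i`, `Y` contains `prime (v i)` and `orig u` for every `u ∈ V_i` with
`u ≠ v i`. -/
theorem independentSet_of_multicut {V : Type*} [Fintype V] [DecidableEq V]
    (G : SimpleGraph V) {r : ℕ} (P : V → Fin r) (m : Fin r → ℕ)
    (ord : ∀ i, Fin (m i) ≃ {v : V // P v = i})
    (hclique : ∀ u v : V, u ≠ v → P u = P v → G.Adj u v)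
    (hm : ∀ i, 2 ≤ m i)
    (Y : Finset (GVert V r))
    (hY : IsMulticut (gadgetGraph G P m ord) (demandPairs V r) Y)
    (hcard : Y.card ≤ Fintype.card V) :
    ∃ v : Fin r → V,
      (∀ i, P (v i) = i) ∧
      Function.Injective v ∧
      (∀ i j, i ≠ j → ¬ G.Adj (v i) (v j)) ∧
      Y.card = Fintype.card V ∧
      (∀ i, GVert.prime (v i) ∈ Y) ∧
      (∀ i, ∀ u : V, P u = i → u ≠ v i → GVert.orig u ∈ Y) :=
  independentSet_of_multicut_general G P m ord hclique hm Y hY hcard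
end
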